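/- arXiv:2406.08944 — 2 statements merged into one kernel-verified Lean document; each statement's English description precedes it below -/
import Mathlib

section
/- For any N : E → ℤ≥0 and any f, g : V → ℤ with Σf = Σg = 0, the number of two-colored oriented configurations on G_N with red source f and blue source g equals the product of the number of all-red oriented configurations on G_N with source f+g and the number of all-blue oriented configurations on G_N with source −f+g: #{∂r = f, ∂b = g}_N = #{∂r = f+g}_N · #{∂b = −f+g}_N. -/
/-! Keeping the orientations of a two-coloured configuration with red current `r` and blue
current `b` gives a one-coloured configuration with current `r + b`; reversing its red strands
gives one with current `rᵀ + b`. Their sources are `∂r + ∂b` and `-∂r + ∂b`, which determine `∂r`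
and `∂b`. The pair determines the colouring, since a strand is red exactly when its two
orientations differ: two orientations of a strand are equal or reversed, and not both because
strands are not loops. -/

open Finset

/-- A finite multigraph on vertex set `V`: a finite set of distinguishable
strands (edges), each with an unordered pair of distinct endpoints. -/
structure MG (V : Type) where
  Strand : Type
  [fin : Fintype Strand]
  [dec : DecidableEq Strand]
  ends : Strand → Sym2 V
  noloop : ∀ s, ¬ (ends s).IsDiag

attribute [instance] MG.fin MG.dec

variable {V : Type} [Fintype V] [DecidableEq V]

/-- An oriented (one-colored) configuration on the multigraph `G`. -/
structure Config (G : MG V) where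
  orient : G.Strand → V × V
  compat : ∀ s, Sym2.mk (orient s).1 (orient s).2 = G.ends s

/-- A two-colored oriented configuration on the multigraph `G`
(`red s = true` means the strand `s` is red, otherwise it is blue). -/
structure Config2 (G : MG V) where
  orient : G.Strand → V × V
  red : G.Strand → Bool
  compat : ∀ s, Sym2.mk (orient s).1 (orient s).2 = G.ends s

/-- The current induced by an oriented configuration. -/
def Config.cur {G : MG V} (ω : Config G) (x y : V) : ℕ :=
  (univ.filter fun s => ω.orient s = (x, y)).card

/-- The red current of a two-colored configuration. -/
def Config2.redCur {G : MG V} (ω : Config2 G) (x y : V) : ℕ :=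
  (univ.filter fun s => ω.orient s = (x, y) ∧ ω.red s = true).card

/-- The blue current of a two-colored configuration. -/
def Config2.blueCur {G : MG V} (ω : Config2 G) (x y : V) : ℕ :=
  (univ.filter fun s => ω.orient s = (x, y) ∧ ω.red s = false).card

/-- The source function of a current. -/
def csrc (n : V → V → ℕ) (x : V) : ℤ :=
  ∑ y, ((n x y : ℤ) - n y x)

/-- The bijection `F`: paint everything red keeping orientations for the first
component; reverse red strands and paint everything blue for the second. -/
def F {G : MG V} (ω : Config2 G) : Config G × Config G :=
  (⟨ω.orient, ω.compat⟩,
   ⟨fun s => if ω.red s then (ω.orient s).swap else ω.orient s, by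
      intro s
      by_cases h : ω.red s <;> simp [h, ← ω.compat s, Sym2.eq_swap]⟩)


attribute [ext] Config Config2

omit [Fintype V] [DecidableEq V] in
theorem MG.swap_ne_of_mk_eq_ends {G : MG V} {s : G.Strand} {p : V × V}
    (h : Sym2.mk p.1 p.2 = G.ends s) : p.swap ≠ p := by
  intro hswap
  apply G.noloop s
  rw [← h, Sym2.mk_isDiag_iff]
  exact congrArg Prod.snd hswap

def Config2.equivProd (G : MG V) : Config2 G ≃ Config G × Config G where
  toFun := F
  invFun p := ⟨p.1.orient, fun s => decide (p.2.orient s ≠ p.1.orient s), p.1.compat⟩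
  left_inv ω := by
    refine Config2.ext rfl (funext fun s => ?_)
    cases hred : ω.red s <;> simp [F, hred, MG.swap_ne_of_mk_eq_ends (ω.compat s)]
  right_inv p := by
    refine Prod.ext (Config.ext rfl) (Config.ext (funext fun s => ?_))
    by_cases hne : p.2.orient s = p.1.orient s
    · simp [F, hne]
    · obtain heq | hswap := Sym2.mk_eq_mk_iff.mp ((p.2.compat s).trans (p.1.compat s).symm)
      · exact absurd heq hne
      · simp [F, hswap, MG.swap_ne_of_mk_eq_ends (p.1.compat s)]

omit [Fintype V] in
theorem cur_F_fst {G : MG V} (ω : Config2 G) : (F ω).1.cur = ω.redCur + ω.blueCur := by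
  ext x y
  simp only [Config.cur, Config2.redCur, Config2.blueCur, Pi.add_apply, card_filter,
    ← sum_add_distrib]
  refine sum_congr rfl fun s _ => ?_
  by_cases ho : ω.orient s = (x, y) <;> cases ω.red s <;> simp [F, ho]

omit [Fintype V] in
theorem cur_F_snd {G : MG V} (ω : Config2 G) :
    (F ω).2.cur = flip ω.redCur + ω.blueCur := by
  ext x y
  simp only [Config.cur, Config2.redCur, Config2.blueCur, Pi.add_apply, flip, card_filter,
    ← sum_add_distrib]
  refine sum_congr rfl fun s _ => ?_
  cases hred : ω.red s <;> simp [F, hred, Prod.swap_eq_iff_eq_swap]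

omit [DecidableEq V] in
theorem csrc_add (n m : V → V → ℕ) (x : V) : csrc (n + m) x = csrc n x + csrc m x := by
  simp only [csrc, Pi.add_apply, ← sum_add_distrib]
  push_cast
  exact sum_congr rfl fun _ _ => by ring

omit [DecidableEq V] in
theorem csrc_flip (n : V → V → ℕ) (x : V) : csrc (flip n) x = -csrc n x := by
  simp only [csrc, flip, ← sum_neg_distrib, neg_sub]

theorem card_two_color_eq_mul_general (G : MG V) (f g : V → ℤ) :
    Nat.card {ω : Config2 G //
        (∀ x, csrc ω.redCur x = f x) ∧ (∀ x, csrc ω.blueCur x = g x)} =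
      Nat.card {ω : Config G // ∀ x, csrc ω.cur x = f x + g x} *
      Nat.card {ω : Config G // ∀ x, csrc ω.cur x = -f x + g x} := by
  have sources_iff (ω : Config2 G) :
      ((∀ x, csrc ω.redCur x = f x) ∧ (∀ x, csrc ω.blueCur x = g x)) ↔
        ((∀ x, csrc (F ω).1.cur x = f x + g x) ∧ (∀ x, csrc (F ω).2.cur x = -f x + g x)) := by
    simp only [← forall_and, cur_F_fst, cur_F_snd, csrc_add, csrc_flip]
    exact forall_congr' fun x => by omega
  rw [← Nat.card_prod, ← Nat.card_congr Equiv.subtypeProdEquivProd]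
  exact Nat.card_congr ((Config2.equivProd G).subtypeEquiv sources_iff)

/-- `#{∂r = f, ∂b = g}_N = #{∂r = f+g}_N · #{∂b = −f+g}_N`. -/
theorem card_two_color_eq_mul (G : MG V) (f g : V → ℤ)
    (hf : ∑ v, f v = 0) (hg : ∑ v, g v = 0) :
    Nat.card {ω : Config2 G //
        (∀ x, csrc ω.redCur x = f x) ∧ (∀ x, csrc ω.blueCur x = g x)} =
      Nat.card {ω : Config G // ∀ x, csrc ω.cur x = f x + g x} *
      Nat.card {ω : Config G // ∀ x, csrc ω.cur x = -f x + g x} :=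
  card_two_color_eq_mul_general G f g
end

section
/- For any φ : V → ℤ, the XY model correlation function satisfies Z·⟨σ^φ⟩ = Σ_{n : ∂n = −φ} w_J(n) = Σ_{n : ∂n = φ} w_J(n), where σ^φ = Π_x σ_x^{φ_x} and w_J(n) = Π (J_xy/2)^{n_{xy}}/n_{xy}!. -/
open Finset MeasureTheory Real

variable {V : Type} [Fintype V] [DecidableEq V]

/-- The box `[0, 2π)^V` of angle configurations. -/
def box (V : Type) [Fintype V] : Set (V → ℝ) :=
  Set.univ.pi fun _ => Set.Ico 0 (2 * Real.pi)

/-- Minus the Hamiltonian of the XY model, in angle variables: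
`−H(θ) = Σ_{xy∈E} J_xy cos(θ_x − θ_y)`, written as a sum over ordered pairs
(with `J` symmetric and `J x y = 0` if `xy` is not an edge). -/
noncomputable def energy (J : V → V → ℝ) (θ : V → ℝ) : ℝ :=
  (∑ x, ∑ y, J x y * Real.cos (θ x - θ y)) / 2

/-- The partition function of the XY model:
`Z = ∫_{(S¹)^V} e^{−H} dσ` with `dσ` the uniform probability measure. -/
noncomputable def Z (J : V → V → ℝ) : ℝ :=
  (∫ θ in box V, Real.exp (energy J θ)) / (2 * Real.pi) ^ (Fintype.card V)

/-- The unnormalized correlation `Z·⟨σ^φ⟩ = ∫ Π_x σ_x^{φ_x} e^{−H} dσ`,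
where `σ_x = e^{iθ_x}`. -/
noncomputable def U (J : V → V → ℝ) (φ : V → ℤ) : ℂ :=
  (∫ θ in box V,
      Complex.exp (Complex.I * ∑ x, (φ x : ℂ) * (θ x : ℂ)) * Real.exp (energy J θ)) /
    ((2 * Real.pi : ℂ)) ^ (Fintype.card V)

/-- The correlation function `⟨σ^φ⟩ = Z·⟨σ^φ⟩ / Z`. -/
noncomputable def corr (J : V → V → ℝ) (φ : V → ℤ) : ℂ :=
  U J φ / (Z J : ℂ)

/-- The weight `w_J(n) = Π_{oriented edges} (J_xy/2)^{n_xy} / n_xy!` of a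
current `n` (oriented edges are ordered pairs; pairs with `J x y = 0` or
`x = y` carry no weight unless `n` vanishes there). -/
noncomputable def wgt (J : V → V → ℝ) (n : V → V → ℕ) : ℝ :=
  ∏ x, ∏ y, (J x y / 2) ^ (n x y) / (n x y).factorial

/-!
By symmetry of `J`, `e^{−H(θ)} = ∏_{(x,y)} exp((J_xy/2) e^{i(θ_x − θ_y)})`, a product over ordered
pairs. Expanding every factor into its exponential series, the term indexed by a current `n` is
`w_J(n) σ^{∂n}`, and the resulting multiple series converges absolutely, uniformly in `θ`. Hence
`σ^φ e^{−H}` may be integrated termwise, and `∫ σ^{φ + ∂n} dσ` is `1` if `∂n = −φ` and `0`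
otherwise. Reversing every edge (`n ↦ nᵀ`) preserves `w_J` and negates `∂n`, which gives the
second sum.
-/

open scoped Complex
open Complex (I)

section ProductOfSeries

variable {β R : Type*} [NormedCommRing R] [CompleteSpace R]

theorem summable_norm_prod_and_hasSum_prod {ι : Type*} [Fintype ι] (f : ι → β → R)
    (hf : ∀ i, Summable fun b => ‖f i b‖) :
    Summable (fun g : ι → β => ‖∏ i, f i (g i)‖) ∧
      HasSum (fun g : ι → β => ∏ i, f i (g i)) (∏ i, ∑' b, f i b) := by
  have := Finite.of_fintype ι
  revert f
  revert ‹Fintype ι›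
  apply Finite.induction_empty_option (P := fun ι => ∀ [Fintype ι] (f : ι → β → R),
    (∀ i, Summable fun b => ‖f i b‖) → Summable (fun g : ι → β => ‖∏ i, f i (g i)‖) ∧
      HasSum (fun g : ι → β => ∏ i, f i (g i)) (∏ i, ∑' b, f i b))
  · intro α γ e ih _ f hf
    have : Fintype α := Fintype.ofEquiv γ e.symm
    obtain ⟨hs, hS⟩ := ih (fun a => f (e a)) fun a => hf (e a)
    let E : (γ → β) ≃ (α → β) := (e.arrowCongr (Equiv.refl β)).symm
    have hE : ∀ g : γ → β, ∏ a, f (e a) (E g a) = ∏ c, f c (g c) := fun g =>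
      e.prod_comp fun c => f c (g c)
    refine ⟨?_, ?_⟩
    · simpa only [Function.comp_def, hE] using E.summable_iff.mpr hs
    · rw [← e.prod_comp fun c => ∑' b, f c b]
      simpa only [Function.comp_def, hE] using E.hasSum_iff.mpr hS
  · intro _ f _
    simp only [Finset.univ_eq_empty, prod_empty]
    exact ⟨.of_finite, by simp⟩
  · intro α _ ih inst f hf
    obtain rfl : inst = instFintypeOption := Subsingleton.elim _ _
    obtain ⟨hs, hS⟩ := ih (fun a => f (some a)) fun a => hf (some a)
    let E := (Equiv.piOptionEquivProd (β := fun _ : Option α => β)).symm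
    have hE : ∀ p, ∏ i, f i (E p i) = f none p.1 * ∏ a, f (some a) (p.2 a) := fun p =>
      Fintype.prod_option _
    refine ⟨?_, ?_⟩
    · rw [← E.summable_iff]
      simpa only [Function.comp_def, hE] using (hf none).mul_norm hs
    · rw [← E.hasSum_iff, Fintype.prod_option]
      have hnone := (hf none).of_norm.hasSum
      have hmul := summable_mul_of_summable_norm (hf none) hs
      exact (hnone.mul hS hmul).congr_fun hE

end ProductOfSeries

theorem Complex.hasSum_prod_pow_div_factorial {ι : Type*} [Fintype ι] (a : ι → ℂ) :
    HasSum (fun n : ι → ℕ => ∏ i, a i ^ n i / (n i).factorial) (cexp (∑ i, a i)) := by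
  have h := (summable_norm_prod_and_hasSum_prod (fun i (k : ℕ) => a i ^ k / (k.factorial : ℂ))
    fun i => NormedSpace.norm_expSeries_div_summable (a i)).2
  have hexp : cexp (∑ i, a i) = ∏ i, ∑' k : ℕ, a i ^ k / k.factorial := by
    rw [Complex.exp_sum]
    refine Finset.prod_congr rfl fun i _ => ?_
    rw [Complex.exp_eq_exp_ℂ, (NormedSpace.expSeries_div_hasSum_exp (a i)).tsum_eq]
  rw [hexp]
  exact h

theorem integral_Ico_exp_I_int_mul (k : ℤ) :
    ∫ t in Set.Ico 0 (2 * π), cexp (I * ((k : ℂ) * t)) = if k = 0 then (2 * π : ℂ) else 0 := by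
  split_ifs with hk
  · simp [hk, Real.pi_pos.le]
  · have hkI : (k : ℂ) * I ≠ 0 := mul_ne_zero (Int.cast_ne_zero.mpr hk) Complex.I_ne_zero
    simp_rw [← mul_assoc, mul_comm I]
    rw [integral_Ico_eq_integral_Ioo, ← integral_Ioc_eq_integral_Ioo,
      ← intervalIntegral.integral_of_le (by positivity), integral_exp_mul_complex hkI]
    have hperiod : (k : ℂ) * I * ((2 * π : ℝ) : ℂ) = k * (2 * π * I) := by push_cast; ring
    rw [hperiod, Complex.exp_int_mul_two_pi_mul_I]
    simp

section

omit [DecidableEq V]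

/-- `σ^m = ∏_x σ_x^{m_x}` with `σ_x = e^{iθ_x}`, written as in the integrand of `U`. -/
noncomputable def spinMonomial (m : V → ℤ) (θ : V → ℝ) : ℂ :=
  cexp (I * ∑ x, (m x : ℂ) * (θ x : ℂ))

theorem spinMonomial_add (m m' : V → ℤ) (θ : V → ℝ) :
    spinMonomial (m + m') θ = spinMonomial m θ * spinMonomial m' θ := by
  rw [spinMonomial, spinMonomial, spinMonomial, ← Complex.exp_add, ← mul_add,
    ← Finset.sum_add_distrib]
  simp only [Pi.add_apply, Int.cast_add, add_mul]

theorem spinMonomial_eq_prod (m : V → ℤ) (θ : V → ℝ) :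
    spinMonomial m θ = ∏ x, cexp (I * ((m x : ℂ) * θ x)) := by
  rw [spinMonomial, Finset.mul_sum, Complex.exp_sum]

theorem norm_spinMonomial (m : V → ℤ) (θ : V → ℝ) : ‖spinMonomial m θ‖ = 1 := by
  have hreal : ∑ x, (m x : ℂ) * (θ x : ℂ) = ((∑ x, (m x : ℝ) * θ x : ℝ) : ℂ) := by push_cast; rfl
  rw [spinMonomial, hreal, Complex.norm_exp_I_mul_ofReal]

theorem continuous_spinMonomial (m : V → ℤ) : Continuous (spinMonomial m) := by
  unfold spinMonomial
  fun_prop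

theorem volume_box : volume (box V) = ENNReal.ofReal (2 * π) ^ Fintype.card V := by
  rw [_root_.box, Real.volume_pi_Ico, sub_zero, Finset.prod_const, Finset.card_univ]

instance isFiniteMeasure_restrict_box : IsFiniteMeasure (volume.restrict (box V)) :=
  isFiniteMeasure_restrict.mpr (by rw [volume_box]; finiteness)

theorem setIntegral_box_spinMonomial (m : V → ℤ) :
    ∫ θ in box V, spinMonomial m θ = if m = 0 then (2 * π : ℂ) ^ Fintype.card V else 0 := by
  simp_rw [spinMonomial_eq_prod]
  rw [_root_.box, volume_pi, Measure.restrict_pi_pi,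
    integral_fintype_prod_eq_prod fun x (t : ℝ) => cexp (I * ((m x : ℂ) * t))]
  simp_rw [integral_Ico_exp_I_int_mul, Fintype.prod_ite_zero, Finset.prod_const,
    Finset.card_univ, funext_iff, Pi.zero_apply]

theorem sum_csrc_mul {R : Type*} [CommRing R] (n : V → V → ℕ) (θ : V → R) :
    ∑ x, (csrc n x : R) * θ x = ∑ x, ∑ y, (n x y : R) * (θ x - θ y) := by
  simp only [csrc, Int.cast_sum, Int.cast_sub, Int.cast_natCast, Finset.sum_mul, sub_mul, mul_sub,
    Finset.sum_sub_distrib]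
  rw [Finset.sum_comm (f := fun x y => (n y x : R) * θ x)]

theorem csrc_transpose (n : V → V → ℕ) : csrc (fun x y => n y x) = -csrc n := by
  ext x
  simp only [csrc, Pi.neg_apply, ← Finset.sum_neg_distrib, neg_sub]

theorem wgt_transpose (J : V → V → ℝ) (hsym : ∀ x y, J x y = J y x) (n : V → V → ℕ) :
    wgt J (fun x y => n y x) = wgt J n := by
  rw [wgt, wgt, Finset.prod_comm]
  simp only [hsym]

theorem summable_abs_wgt (J : V → V → ℝ) : Summable fun n : V → V → ℕ => |wgt J n| := by
  have h := (summable_norm_prod_and_hasSum_prod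
    (fun (p : V × V) (k : ℕ) => (J p.1 p.2 / 2) ^ k / (k.factorial : ℝ))
    fun p => NormedSpace.norm_expSeries_div_summable _).1
  rw [← (Equiv.curry V V ℕ).summable_iff]
  refine h.congr fun g => ?_
  rw [Real.norm_eq_abs, Fintype.prod_prod_type]
  rfl

theorem ofReal_energy_eq_sum_exp (J : V → V → ℝ) (hsym : ∀ x y, J x y = J y x) (θ : V → ℝ) :
    (energy J θ : ℂ) = ∑ p : V × V, (J p.1 p.2 / 2 : ℂ) * cexp (I * (θ p.1 - θ p.2)) := by
  set S := ∑ p : V × V, (J p.1 p.2 / 2 : ℂ) * cexp (I * (θ p.1 - θ p.2))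
  have hS : S = ∑ p : V × V, (J p.1 p.2 / 2 : ℂ) * cexp (-(I * (θ p.1 - θ p.2))) := by
    simp only [S, Fintype.sum_prod_type]
    rw [Finset.sum_comm]
    simp only [hsym, neg_mul_eq_mul_neg, neg_sub]
  calc (energy J θ : ℂ)
      = ∑ p : V × V, (J p.1 p.2 / 2 : ℂ) * (cexp (I * (θ p.1 - θ p.2)) +
          cexp (-(I * (θ p.1 - θ p.2)))) / 2 := by
        simp only [energy, Complex.ofReal_div, Complex.ofReal_sum, Complex.ofReal_mul,
          Complex.ofReal_cos, Complex.cos, Fintype.sum_prod_type, Finset.sum_div]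
        push_cast
        refine Finset.sum_congr rfl fun x _ => Finset.sum_congr rfl fun y _ => ?_
        ring_nf
    _ = S := by
        rw [← Finset.sum_div]
        simp only [mul_add, Finset.sum_add_distrib, ← hS]
        ring

theorem prod_pow_div_factorial_eq_wgt_mul_spinMonomial (J : V → V → ℝ) (θ : V → ℝ)
    (n : V → V → ℕ) :
    ∏ p : V × V, ((J p.1 p.2 / 2 : ℂ) * cexp (I * (θ p.1 - θ p.2))) ^ n p.1 p.2 /
      (n p.1 p.2).factorial = wgt J n * spinMonomial (csrc n) θ := by
  have hfactor : ∀ (c t : ℂ) (k : ℕ),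
      (c * cexp (I * t)) ^ k / k.factorial = c ^ k / k.factorial * cexp (I * (k * t)) := by
    intro c t k
    rw [mul_pow, ← Complex.exp_nat_mul]
    ring_nf
  simp only [hfactor, Finset.prod_mul_distrib, ← Complex.exp_sum, ← Finset.mul_sum,
    spinMonomial, sum_csrc_mul, wgt, Fintype.prod_prod_type, Fintype.sum_prod_type]
  push_cast
  rfl

theorem hasSum_wgt_mul_spinMonomial (J : V → V → ℝ) (hsym : ∀ x y, J x y = J y x)
    (θ : V → ℝ) :
    HasSum (fun n : V → V → ℕ => (wgt J n : ℂ) * spinMonomial (csrc n) θ)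
      (Real.exp (energy J θ)) := by
  have h := Complex.hasSum_prod_pow_div_factorial
    fun p : V × V => (J p.1 p.2 / 2 : ℂ) * cexp (I * (θ p.1 - θ p.2))
  rw [← ofReal_energy_eq_sum_exp J hsym, ← Complex.ofReal_exp,
    ← (Equiv.curry V V ℕ).symm.hasSum_iff] at h
  exact h.congr_fun fun n => (prod_pow_div_factorial_eq_wgt_mul_spinMonomial J θ n).symm

theorem hasSum_setIntegral_box_wgt_mul_spinMonomial (J : V → V → ℝ)
    (hsym : ∀ x y, J x y = J y x) (φ : V → ℤ) :
    HasSum (fun n : V → V → ℕ => ∫ θ in box V, (wgt J n : ℂ) * spinMonomial (φ + csrc n) θ)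
      (∫ θ in box V, spinMonomial φ θ * Real.exp (energy J θ)) := by
  set F : (V → V → ℕ) → (V → ℝ) → ℂ := fun n θ => wgt J n * spinMonomial (φ + csrc n) θ
  have hF : ∀ θ, HasSum (F · θ) (spinMonomial φ θ * Real.exp (energy J θ)) := fun θ => by
    simpa only [F, spinMonomial_add, mul_left_comm] using
      (hasSum_wgt_mul_spinMonomial J hsym θ).mul_left (spinMonomial φ θ)
  have hnorm : ∀ n θ, ‖F n θ‖ = |wgt J n| := fun n θ => by
    simp only [F, norm_mul, norm_spinMonomial, Complex.norm_real, Real.norm_eq_abs, mul_one]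
  have hint : ∀ n, Integrable (F n) (volume.restrict (box V)) := fun n =>
    Integrable.of_bound (continuous_const.mul (continuous_spinMonomial _)).aestronglyMeasurable
      |wgt J n| (ae_of_all _ fun θ => (hnorm n θ).le)
  have hint_norm : ∀ n, ∫ θ in box V, ‖F n θ‖ = (2 * π) ^ Fintype.card V * |wgt J n| := fun n => by
    simp only [hnorm, setIntegral_const, measureReal_def, volume_box, ENNReal.toReal_pow,
      ENNReal.toReal_ofReal Real.two_pi_pos.le, smul_eq_mul]
  have h := hasSum_integral_of_summable_integral_norm hint
    (by simpa only [hint_norm] using (summable_abs_wgt J).mul_left ((2 * π) ^ Fintype.card V))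
  simpa only [fun θ => (hF θ).tsum_eq] using h

theorem hasSum_wgt_U (J : V → V → ℝ) (hsym : ∀ x y, J x y = J y x) (φ : V → ℤ) :
    HasSum (fun n : {n : V → V → ℕ // ∀ x, csrc n x = -φ x} => (wgt J n.1 : ℂ)) (U J φ) := by
  have hsource : ∀ n, φ + csrc n = 0 ↔ n ∈ {n | ∀ x, csrc n x = -φ x} := fun n => by
    simp only [add_eq_zero_iff_eq_neg', funext_iff, Pi.neg_apply, Set.mem_ofPred_eq]
  refine (hasSum_subtype_iff_indicator (s := {n | ∀ x, csrc n x = -φ x})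
    (f := fun n => (wgt J n : ℂ))).mpr ?_
  refine ((hasSum_setIntegral_box_wgt_mul_spinMonomial J hsym φ).div_const
    ((2 * π : ℂ) ^ Fintype.card V)).congr_fun fun n => ?_
  rw [integral_const_mul, setIntegral_box_spinMonomial]
  by_cases hn : φ + csrc n = 0
  · rw [Set.indicator_of_mem ((hsource n).mp hn), if_pos hn]
    field_simp
  · rw [Set.indicator_of_notMem (mt (hsource n).mpr hn), if_neg hn, mul_zero, zero_div]

theorem tsum_wgt_csrc_neg (J : V → V → ℝ) (hsym : ∀ x y, J x y = J y x) (φ : V → ℤ) :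
    ∑' n : {n : V → V → ℕ // ∀ x, csrc n x = -φ x}, wgt J n.1 =
      ∑' n : {n : V → V → ℕ // ∀ x, csrc n x = φ x}, wgt J n.1 := by
  let e := (Equiv.piComm fun (_ _ : V) => ℕ).subtypeEquiv (p := fun n => ∀ x, csrc n x = -φ x)
    (q := fun n => ∀ x, csrc n x = φ x) fun n => by
      change _ ↔ ∀ x, csrc (fun x y => n y x) x = φ x
      simp only [csrc_transpose, Pi.neg_apply, neg_eq_iff_eq_neg]
  rw [← e.tsum_eq]
  exact tsum_congr fun n => (wgt_transpose J hsym n.1).symm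

end

theorem current_representation_general (J : V → V → ℝ)
    (hsym : ∀ x y, J x y = J y x) (φ : V → ℤ) :
    U J φ = ((∑' n : {n : V → V → ℕ // ∀ x, csrc n x = -φ x}, wgt J n.1 : ℝ) : ℂ) ∧
    U J φ = ((∑' n : {n : V → V → ℕ // ∀ x, csrc n x = φ x}, wgt J n.1 : ℝ) : ℂ) := by
  have hU : U J φ = ((∑' n : {n : V → V → ℕ // ∀ x, csrc n x = -φ x}, wgt J n.1 : ℝ) : ℂ) := by
    rw [← (hasSum_wgt_U J hsym φ).tsum_eq, Complex.ofReal_tsum]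
  exact ⟨hU, hU.trans (by rw [tsum_wgt_csrc_neg J hsym φ])⟩

/-- Random current representation of correlation functions:
`Z·⟨σ^φ⟩ = Σ_{∂n = −φ} w_J(n) = Σ_{∂n = φ} w_J(n)`. -/
theorem current_representation (J : V → V → ℝ)
    (hsym : ∀ x y, J x y = J y x) (hpos : ∀ x y, 0 ≤ J x y)
    (hdiag : ∀ x, J x x = 0) (φ : V → ℤ) :
    U J φ = ((∑' n : {n : V → V → ℕ // ∀ x, csrc n x = -φ x}, wgt J n.1 : ℝ) : ℂ) ∧
    U J φ = ((∑' n : {n : V → V → ℕ // ∀ x, csrc n x = φ x}, wgt J n.1 : ℝ) : ℂ) :=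
  current_representation_general J hsym φ
end
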